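/- arXiv:2110.00455 — 4 statements merged into one kernel-verified Lean document; each statement's English description precedes it below -/
import Mathlib

section
/- Let Y ⊆ R^m be nonempty, closed, convex, and let f : R^m → R be differentiable with L_f-Lipschitz gradient on Y. Consider projected gradient iterations y_{k+1} = Proj_Y(y_k - α_k ∇f(y_k)) with step sizes α_k ∈ [α_low, α_high] ⊂ (0, 2/L_f), starting from y_0 ∈ Y. If m ≤ f(y) ≤ M for all y ∈ Y, then min_{0 ≤ k ≤ K} ‖R_{α_low}(y_k)‖ ≤ C_f / √(K+1), where C_f = √((M − m) / (1/α_high − L_f/2)) and R_α(y) = y − Proj_Y(y − α ∇f(y)). -/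
open InnerProductSpace

local notation "⟪" x ", " y "⟫" => @inner ℝ _ _ x y

section Aux

variable {E : Type*} [NormedAddCommGroup E] [InnerProductSpace ℝ E] [CompleteSpace E]

/-- Variational inequality for the projection. -/
lemma aux_vi {Y : Set E} (hYcv : Convex ℝ Y)
    {proj : E → E} (hproj : ∀ u, proj u ∈ Y ∧ ∀ w ∈ Y, dist u (proj u) ≤ dist u w)
    (u : E) : ∀ w ∈ Y, ⟪u - proj u, w - proj u⟫ ≤ 0 := by
  have hmem := (hproj u).1
  haveI : Nonempty Y := ⟨⟨proj u, hmem⟩⟩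
  refine (norm_eq_iInf_iff_real_inner_le_zero hYcv hmem).1 ?_
  refine le_antisymm (le_ciInf fun w => ?_) (ciInf_le (⟨0, ?_⟩ : BddBelow (Set.range fun w : Y => ‖u - w‖)) ⟨proj u, hmem⟩)
  · simpa [dist_eq_norm] using (hproj u).2 w w.2
  · rintro _ ⟨w, rfl⟩; exact norm_nonneg _

/-- Descent lemma. -/
lemma aux_descent {f : E → ℝ} {f' : E → E} (hf : ∀ y, HasGradientAt f (f' y) y)
    {Lf : ℝ} (hLf : 0 ≤ Lf) (hLip : ∀ u v, ‖f' u - f' v‖ ≤ Lf * ‖u - v‖) (u v : E) :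
    f v ≤ f u + ⟪f' u, v - u⟫ + Lf / 2 * ‖v - u‖ ^ 2 := by
  set p : ℝ → E := fun t => u + t • (v - u) with hp
  have hline : ∀ t : ℝ, HasDerivAt p (v - u) t := by
    intro t
    have := ((hasDerivAt_id t).smul_const (v - u)).const_add u
    simpa [hp] using this
  have hφ : ∀ t : ℝ, HasDerivAt (fun s => f (p s)) ⟪f' (p t), v - u⟫ t := by
    intro t
    have h1 : HasFDerivAt f (toDual ℝ E (f' (p t))) (p t) :=
      hasGradientAt_iff_hasFDerivAt.mp (hf (p t))
    have := h1.comp_hasDerivAt t (hline t)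
    simpa [toDual_apply_apply, Function.comp_def] using this
  set ψ : ℝ → ℝ := fun t => f u + t * ⟪f' u, v - u⟫ + Lf / 2 * t ^ 2 * ‖v - u‖ ^ 2 with hψ
  have hψ' : ∀ t : ℝ, HasDerivAt ψ (⟪f' u, v - u⟫ + Lf * t * ‖v - u‖ ^ 2) t := by
    intro t
    have h1 : HasDerivAt (fun t : ℝ => t * ⟪f' u, v - u⟫) ⟪f' u, v - u⟫ t := by
      simpa using (hasDerivAt_id t).mul_const ⟪f' u, v - u⟫
    have h2 : HasDerivAt (fun t : ℝ => Lf / 2 * t ^ 2 * ‖v - u‖ ^ 2)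
        (Lf * t * ‖v - u‖ ^ 2) t := by
      have := ((hasDerivAt_pow 2 t).const_mul (Lf / 2)).mul_const (‖v - u‖ ^ 2)
      refine this.congr_deriv ?_
      ring
    simpa [hψ, Pi.add_def] using ((hasDerivAt_const t (f u)).add h1).add h2
  set h : ℝ → ℝ := fun t => ψ t - f (p t) with hh
  have hhd : ∀ t : ℝ, HasDerivAt h
      (⟪f' u, v - u⟫ + Lf * t * ‖v - u‖ ^ 2 - ⟪f' (p t), v - u⟫) t :=
    fun t => (hψ' t).sub (hφ t)
  have hmono : MonotoneOn h (Set.Icc (0:ℝ) 1) := by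
    apply monotoneOn_of_deriv_nonneg (convex_Icc 0 1)
    · exact Continuous.continuousOn (by
        have : Continuous h := by
          have : Differentiable ℝ h := fun t => (hhd t).differentiableAt
          exact this.continuous
        exact this)
    · intro t _
      exact (hhd t).differentiableAt.differentiableWithinAt
    · intro t ht
      rw [interior_Icc] at ht
      rw [(hhd t).deriv]
      have key : ⟪f' (p t), v - u⟫ - ⟪f' u, v - u⟫ ≤ Lf * t * ‖v - u‖ ^ 2 := by
        have h1 : ⟪f' (p t) - f' u, v - u⟫ ≤ ‖f' (p t) - f' u‖ * ‖v - u‖ :=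
          real_inner_le_norm _ _
        have h2 : ‖f' (p t) - f' u‖ ≤ Lf * (t * ‖v - u‖) := by
          have := hLip (p t) u
          have hpt : p t - u = t • (v - u) := by simp [hp]
          rw [hpt] at this
          simpa [norm_smul, abs_of_nonneg ht.1.le, mul_assoc] using this
        have h3 : ‖f' (p t) - f' u‖ * ‖v - u‖ ≤ Lf * (t * ‖v - u‖) * ‖v - u‖ := by
          apply mul_le_mul_of_nonneg_right h2 (norm_nonneg _)
        rw [inner_sub_left] at h1
        nlinarith [norm_nonneg (v - u)]
      linarith
  have h01 : h 0 ≤ h 1 := hmono (by norm_num) (by norm_num) (by norm_num)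
  have hp0 : p 0 = u := by simp [hp]
  have hp1 : p 1 = v := by simp [hp]
  simp only [hh, hψ, hp0, hp1] at h01
  nlinarith [h01]

/-- Monotonicity of the residual in the step size. -/
lemma aux_mono {Y : Set E} (hYcv : Convex ℝ Y)
    {proj : E → E} (hproj : ∀ u, proj u ∈ Y ∧ ∀ w ∈ Y, dist u (proj u) ≤ dist u w)
    {a b : ℝ} (ha : 0 < a) (hab : a ≤ b) (z g : E) :
    ‖z - proj (z - a • g)‖ ≤ ‖z - proj (z - b • g)‖ := by
  rcases eq_or_lt_of_le hab with rfl | hlt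
  · exact le_refl _
  set pa := proj (z - a • g) with hpa
  set pb := proj (z - b • g) with hpb
  have h1 : ⟪z - a • g - pa, pb - pa⟫ ≤ 0 :=
    aux_vi hYcv hproj (z - a • g) pb (hproj _).1
  have h2 : ⟪z - b • g - pb, pa - pb⟫ ≤ 0 :=
    aux_vi hYcv hproj (z - b • g) pa (hproj _).1
  -- expand inner products
  have e1 : ⟪z - pa, pb - pa⟫ - a * ⟪g, pb - pa⟫ ≤ 0 := by
    have : z - a • g - pa = (z - pa) - a • g := by abel
    rw [this, inner_sub_left, real_inner_smul_left] at h1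
    linarith
  have e2 : ⟪z - pb, pa - pb⟫ - b * ⟪g, pa - pb⟫ ≤ 0 := by
    have : z - b • g - pb = (z - pb) - b • g := by abel
    rw [this, inner_sub_left, real_inner_smul_left] at h2
    linarith
  -- key: ⟪g, pb - pa⟫ ≤ 0
  have hsum : ‖pb - pa‖ ^ 2 + (b - a) * ⟪g, pb - pa⟫ ≤ 0 := by
    have e3 : ⟪z - pb, pa - pb⟫ = -⟪z - pb, pb - pa⟫ := by
      rw [← inner_neg_right]; congr 1; abel
    have e4 : ⟪g, pa - pb⟫ = -⟪g, pb - pa⟫ := by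
      rw [← inner_neg_right]; congr 1; abel
    rw [e3, e4] at e2
    have e5 : ⟪z - pa, pb - pa⟫ - ⟪z - pb, pb - pa⟫ = ‖pb - pa‖ ^ 2 := by
      rw [← inner_sub_left]
      have : z - pa - (z - pb) = pb - pa := by abel
      rw [this, real_inner_self_eq_norm_sq]
    nlinarith
  have hg : ⟪g, pb - pa⟫ ≤ 0 := by nlinarith [sq_nonneg ‖pb - pa‖]
  have hkey : ⟪z - pa, pb - pa⟫ ≤ 0 := by nlinarith
  have hnorm : ‖z - pa‖ ^ 2 ≤ ‖z - pb‖ ^ 2 := by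
    have heq : z - pb = (z - pa) - (pb - pa) := by abel
    have hexp : ‖(z - pa) - (pb - pa)‖ ^ 2
        = ‖z - pa‖ ^ 2 - 2 * ⟪z - pa, pb - pa⟫ + ‖pb - pa‖ ^ 2 :=
      norm_sub_sq_real _ _
    rw [heq, hexp]
    nlinarith [sq_nonneg ‖pb - pa‖]
  nlinarith [norm_nonneg (z - pa), norm_nonneg (z - pb)]

end Aux

/-- Projected gradient descent with step sizes in `[α_low, α_high] ⊂ (0, 2/L_f)`
on a function bounded between `m` and `M` on `Y` drives the smallest residual to zero at a
`1/√(K+1)` rate, with constant `C_f = √((M−m)/(1/α_high − L_f/2))`. -/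
theorem projected_gradient_min_residual_rate {d : ℕ}
    (Y : Set (EuclideanSpace ℝ (Fin d))) (hYne : Y.Nonempty) (hYcl : IsClosed Y)
    (hYcv : Convex ℝ Y)
    (f : EuclideanSpace ℝ (Fin d) → ℝ)
    (f' : EuclideanSpace ℝ (Fin d) → EuclideanSpace ℝ (Fin d))
    (hf : ∀ y, HasGradientAt f (f' y) y)
    (Lf : ℝ) (hLf : 0 < Lf)
    (hLip : ∀ u v, ‖f' u - f' v‖ ≤ Lf * ‖u - v‖)
    (proj : EuclideanSpace ℝ (Fin d) → EuclideanSpace ℝ (Fin d))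
    (hproj : ∀ u, proj u ∈ Y ∧ ∀ w ∈ Y, dist u (proj u) ≤ dist u w)
    (αlow αhigh : ℝ) (hαlow : 0 < αlow) (hαle : αlow ≤ αhigh) (hαhigh : αhigh < 2 / Lf)
    (α : ℕ → ℝ) (hα : ∀ k, α k ∈ Set.Icc αlow αhigh)
    (y : ℕ → EuclideanSpace ℝ (Fin d)) (hy0 : y 0 ∈ Y)
    (hrec : ∀ k, y (k + 1) = proj (y k - α k • f' (y k)))
    (m M : ℝ) (hbd : ∀ w ∈ Y, m ≤ f w ∧ f w ≤ M)
    (K : ℕ) :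
    ∃ k ≤ K, ‖y k - proj (y k - αlow • f' (y k))‖ ≤
      Real.sqrt ((M - m) / (1 / αhigh - Lf / 2)) / Real.sqrt (K + 1) := by
  have hαhigh0 : 0 < αhigh := lt_of_lt_of_le hαlow hαle
  set c : ℝ := 1 / αhigh - Lf / 2 with hc
  have hcpos : 0 < c := by
    have : Lf / 2 = 1 / (2 / Lf) := by field_simp
    have h2 : 1 / (2 / Lf) < 1 / αhigh := one_div_lt_one_div_of_lt hαhigh0 hαhigh
    rw [hc]; linarith [this ▸ h2]
  have hmem : ∀ k, y k ∈ Y := by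
    intro k
    cases k with
    | zero => exact hy0
    | succ n => rw [hrec n]; exact (hproj _).1
  -- per-step decrease
  have step : ∀ k, f (y (k + 1)) + c * ‖y (k + 1) - y k‖ ^ 2 ≤ f (y k) := by
    intro k
    obtain ⟨hak, hak'⟩ := hα k
    have hapos : 0 < α k := lt_of_lt_of_le hαlow hak
    set g := f' (y k)
    set r := y k - y (k + 1) with hr
    have hvi : ⟪(y k - α k • g) - y (k + 1), y k - y (k + 1)⟫ ≤ 0 := by
      rw [hrec k]
      exact aux_vi hYcv hproj (y k - α k • g) (y k) (hmem k)
    have hvi' : ‖r‖ ^ 2 ≤ α k * ⟪g, r⟫ := by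
      have : (y k - α k • g) - y (k + 1) = r - α k • g := by rw [hr]; abel
      rw [this, ← hr, inner_sub_left, real_inner_smul_left,
        real_inner_self_eq_norm_sq] at hvi
      linarith
    have hdes : f (y (k + 1)) ≤ f (y k) + ⟪g, y (k + 1) - y k⟫
        + Lf / 2 * ‖y (k + 1) - y k‖ ^ 2 :=
      aux_descent hf hLf.le hLip (y k) (y (k + 1))
    have hneg : ⟪g, y (k + 1) - y k⟫ = -⟪g, r⟫ := by
      rw [← inner_neg_right]; congr 1; rw [hr]; abel
    have hnr : ‖y (k + 1) - y k‖ = ‖r‖ := by rw [hr, norm_sub_rev]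
    rw [hneg, hnr] at hdes
    have hainv : 1 / αhigh ≤ 1 / α k := one_div_le_one_div_of_le hapos hak'
    -- from hvi' : ⟪g, r⟫ ≥ ‖r‖²/(α k)
    have h1 : ‖r‖ ^ 2 / α k ≤ ⟪g, r⟫ := by
      rw [div_le_iff₀ hapos]; linarith [hvi']
    have h2 : (1 / αhigh) * ‖r‖ ^ 2 ≤ (1 / α k) * ‖r‖ ^ 2 :=
      mul_le_mul_of_nonneg_right hainv (sq_nonneg _)
    have h3 : (1 / α k) * ‖r‖ ^ 2 = ‖r‖ ^ 2 / α k := by ring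
    rw [hnr, hc]
    nlinarith
  -- telescoping sum
  have hsum : ∀ n : ℕ, f (y n) + c * ∑ k ∈ Finset.range n, ‖y (k + 1) - y k‖ ^ 2 ≤ f (y 0) := by
    intro n
    induction n with
    | zero => simp
    | succ n ih =>
      rw [Finset.sum_range_succ]
      have := step n
      nlinarith
  have hMm : m ≤ M := by
    obtain ⟨w, hw⟩ := hYne
    linarith [(hbd w hw).1, (hbd w hw).2]
  have htotal : c * ∑ k ∈ Finset.range (K + 1), ‖y (k + 1) - y k‖ ^ 2 ≤ M - m := by
    have h1 := hsum (K + 1)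
    have h2 := (hbd (y (K + 1)) (hmem (K + 1))).1
    have h3 := (hbd (y 0) (hmem 0)).2
    linarith
  -- choose the minimizing index
  obtain ⟨k, hkmem, hkmin⟩ := Finset.exists_min_image (Finset.range (K + 1))
    (fun j => ‖y (j + 1) - y j‖) ⟨0, by simp⟩
  have hkK : k ≤ K := Nat.lt_succ_iff.mp (Finset.mem_range.mp hkmem)
  refine ⟨k, hkK, ?_⟩
  have hcard : (K + 1 : ℝ) * ‖y (k + 1) - y k‖ ^ 2
      ≤ ∑ j ∈ Finset.range (K + 1), ‖y (j + 1) - y j‖ ^ 2 := by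
    have : ∑ _j ∈ Finset.range (K + 1), ‖y (k + 1) - y k‖ ^ 2
        ≤ ∑ j ∈ Finset.range (K + 1), ‖y (j + 1) - y j‖ ^ 2 := by
      apply Finset.sum_le_sum
      intro j hj
      exact pow_le_pow_left₀ (norm_nonneg _) (hkmin j hj) 2
    simpa using this
  have hKpos : (0:ℝ) < (K : ℝ) + 1 := by positivity
  have hbound : ‖y (k + 1) - y k‖ ^ 2 ≤ (M - m) / c / ((K:ℝ) + 1) := by
    rw [div_div, le_div_iff₀ (by positivity)]
    nlinarith
  -- residual comparison
  have hres : ‖y k - proj (y k - αlow • f' (y k))‖ ≤ ‖y (k + 1) - y k‖ := by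
    have := aux_mono hYcv hproj hαlow (hα k).1 (y k) (f' (y k))
    rw [← hrec k] at this
    rw [norm_sub_rev (y (k+1))]
    exact this
  have hfinal : ‖y (k + 1) - y k‖ ≤ Real.sqrt ((M - m) / c / ((K:ℝ) + 1)) := by
    have h1 : ‖y (k + 1) - y k‖ = Real.sqrt (‖y (k + 1) - y k‖ ^ 2) := by
      rw [Real.sqrt_sq (norm_nonneg _)]
    rw [h1]
    exact Real.sqrt_le_sqrt hbound
  have hsq : Real.sqrt ((M - m) / c / ((K:ℝ) + 1))
      = Real.sqrt ((M - m) / c) / Real.sqrt ((K:ℝ) + 1) := by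
    rw [Real.sqrt_div (div_nonneg (by linarith) hcpos.le)]
  rw [hsq] at hfinal
  have : ((K:ℝ) + 1) = ((K:ℝ) + 1) := rfl
  calc ‖y k - proj (y k - αlow • f' (y k))‖ ≤ ‖y (k + 1) - y k‖ := hres
    _ ≤ Real.sqrt ((M - m) / c) / Real.sqrt ((K:ℝ) + 1) := hfinal
    _ = Real.sqrt ((M - m) / (1 / αhigh - Lf / 2)) / Real.sqrt ((K:ℝ) + 1) := by rw [hc]
end

section
/- Let Y ⊆ R^m be closed convex and f : R^m → R differentiable with L_f-Lipschitz gradient. For fixed y ∈ Y, the function α ↦ ‖y − Proj_Y(y − α ∇f(y))‖ is nondecreasing on (0, ∞); in particular, for 0 < α ≤ α', one has ‖R_α(y)‖ ≤ ‖R_{α'}(y)‖. -/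
open RealInnerProductSpace

/-- Variational inequality for the projection onto a convex set. -/
lemma proj_var_ineq {E : Type*} [NormedAddCommGroup E] [InnerProductSpace ℝ E]
    {Y : Set E} (hYcv : Convex ℝ Y)
    (proj : E → E)
    (hproj : ∀ u, proj u ∈ Y ∧ ∀ w ∈ Y, dist u (proj u) ≤ dist u w)
    (u : E) :
    ∀ w ∈ Y, ⟪u - proj u, w - proj u⟫ ≤ 0 := by
  have h1 := (hproj u).1
  have h2 := (hproj u).2
  haveI : Nonempty Y := ⟨⟨proj u, h1⟩⟩
  rw [← norm_eq_iInf_iff_real_inner_le_zero hYcv h1]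
  apply le_antisymm
  · exact le_ciInf fun w => by simpa [dist_eq_norm] using h2 w w.2
  · have hbd : BddBelow (Set.range fun w : Y => ‖u - (w : E)‖) :=
      ⟨0, by rintro x ⟨w, rfl⟩; positivity⟩
    exact ciInf_le hbd ⟨proj u, h1⟩

lemma inner_expand_aux {E : Type*} [NormedAddCommGroup E] [InnerProductSpace ℝ E]
    (a b g : E) (t : ℝ) :
    ⟪a - t • g, a - b⟫ = ⟪a, a⟫ - ⟪a, b⟫ - t * (⟪g, a⟫ - ⟪g, b⟫) := by
  simp only [inner_sub_left, inner_sub_right, real_inner_smul_left]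
  ring

lemma scalar_step (α α' na nb iab iga igb : ℝ) (hα : 0 < α) (hαα' : α ≤ α')
    (hna : 0 ≤ na) (hnb : 0 ≤ nb) (habn : iab ≤ na * nb)
    (h1 : na ^ 2 - iab - α * (iga - igb) ≤ 0)
    (h2 : nb ^ 2 - iab - α' * (igb - iga) ≤ 0) : na ≤ nb := by
  rcases le_or_gt (iga - igb) 0 with hs | hs
  · have key : na ^ 2 ≤ na * nb := by nlinarith
    nlinarith
  · nlinarith [sq_nonneg (na - nb)]

/-- For `y ∈ Y`, the residual norm `α ↦ ‖y − Proj_Y (y − α ∇f y)‖` is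
nondecreasing on `(0, ∞)`: for `0 < α ≤ α'`, `‖R_α(y)‖ ≤ ‖R_{α'}(y)‖`. -/
theorem residual_norm_monotone_in_stepsize {d : ℕ}
    (Y : Set (EuclideanSpace ℝ (Fin d))) (hYne : Y.Nonempty) (hYcl : IsClosed Y)
    (hYcv : Convex ℝ Y)
    (f : EuclideanSpace ℝ (Fin d) → ℝ)
    (f' : EuclideanSpace ℝ (Fin d) → EuclideanSpace ℝ (Fin d))
    (hf : ∀ y, HasGradientAt f (f' y) y)
    (Lf : ℝ) (hLf : 0 < Lf)
    (hLip : ∀ u v, ‖f' u - f' v‖ ≤ Lf * ‖u - v‖)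
    (proj : EuclideanSpace ℝ (Fin d) → EuclideanSpace ℝ (Fin d))
    (hproj : ∀ u, proj u ∈ Y ∧ ∀ w ∈ Y, dist u (proj u) ≤ dist u w)
    (y : EuclideanSpace ℝ (Fin d)) (hy : y ∈ Y)
    (α α' : ℝ) (hα : 0 < α) (hαα' : α ≤ α') :
    ‖y - proj (y - α • f' y)‖ ≤ ‖y - proj (y - α' • f' y)‖ := by
  set g := f' y with hg
  set p := proj (y - α • g) with hp
  set q := proj (y - α' • g) with hq
  set a := y - p with ha
  set b := y - q with hb
  have hqY : q ∈ Y := (hproj _).1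
  have hpY : p ∈ Y := (hproj _).1
  have h1 : ⟪(y - α • g) - p, q - p⟫ ≤ 0 :=
    proj_var_ineq hYcv proj hproj _ q hqY
  have h2 : ⟪(y - α' • g) - q, p - q⟫ ≤ 0 :=
    proj_var_ineq hYcv proj hproj _ p hpY
  have e1 : (y - α • g) - p = a - α • g := by rw [ha]; abel
  have e2 : (y - α' • g) - q = b - α' • g := by rw [hb]; abel
  have e3 : q - p = a - b := by rw [ha, hb]; abel
  have e4 : p - q = b - a := by rw [ha, hb]; abel
  rw [e1, e3, inner_expand_aux] at h1
  rw [e2, e4, inner_expand_aux] at h2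
  rw [real_inner_comm a b] at h2
  have haa : ⟪a, a⟫ = ‖a‖ ^ 2 := real_inner_self_eq_norm_sq a
  have hbb : ⟪b, b⟫ = ‖b‖ ^ 2 := real_inner_self_eq_norm_sq b
  have habn : ⟪a, b⟫ ≤ ‖a‖ * ‖b‖ := real_inner_le_norm a b
  rw [haa] at h1
  rw [hbb] at h2
  have hna : (0:ℝ) ≤ ‖a‖ := norm_nonneg a
  have hnb : (0:ℝ) ≤ ‖b‖ := norm_nonneg b
  obtain ⟨iab, hiab⟩ : ∃ r : ℝ, (⟪a, b⟫ : ℝ) = r := ⟨_, rfl⟩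
  obtain ⟨iga, higa⟩ : ∃ r : ℝ, (⟪g, a⟫ : ℝ) = r := ⟨_, rfl⟩
  obtain ⟨igb, higb⟩ : ∃ r : ℝ, (⟪g, b⟫ : ℝ) = r := ⟨_, rfl⟩
  obtain ⟨na, hnaa⟩ : ∃ r : ℝ, ‖a‖ = r := ⟨_, rfl⟩
  obtain ⟨nb, hnbb⟩ : ∃ r : ℝ, ‖b‖ = r := ⟨_, rfl⟩
  rw [higa, higb] at h1 h2
  rw [hnaa] at h1 habn hna ⊢
  rw [hnbb] at h2 habn hnb ⊢
  rw [hiab] at habn h1 h2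
  exact scalar_step α α' na nb iab iga igb hα hαα' hna hnb habn h1 h2
end

section
/- Let Y ⊆ R^m be closed convex and f : R^m → R convex and differentiable with L-Lipschitz gradient, with the set S of minimizers of f over Y nonempty. The FISTA/Nesterov accelerated projected gradient iterates with step size 1/L, started at y_0 = u_0 = z ∈ Y, satisfy f(y_K) − min_{y ∈ Y} f(y) ≤ 2L·dist(z, S)² / (K+1)². -/
open InnerProductSpace intervalIntegral

variable {E : Type*} [NormedAddCommGroup E] [InnerProductSpace ℝ E] [CompleteSpace E]

/-- Derivative of `f` along a line, from the gradient. -/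
lemma line_hasDerivAt (f : E → ℝ) (gf : E → E) (hgf : ∀ w, HasGradientAt f (gf w) w)
    (x v : E) (s : ℝ) :
    HasDerivAt (fun r : ℝ => f (x + r • v)) ⟪gf (x + s • v), v⟫_ℝ s := by
  have hc : HasDerivAt (fun r : ℝ => x + r • v) v s := by
    simpa using ((hasDerivAt_id s).smul_const v).const_add x
  have := ((hgf (x + s • v)).hasFDerivAt).comp_hasDerivAt s hc
  simpa [InnerProductSpace.toDual_apply_apply, Function.comp_def] using this

/-- Descent lemma: quadratic upper bound from Lipschitz gradient. -/
lemma descent_lemma (f : E → ℝ) (gf : E → E) (hgf : ∀ w, HasGradientAt f (gf w) w)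
    (L : ℝ) (hL : 0 ≤ L) (hLip : ∀ u v, ‖gf u - gf v‖ ≤ L * ‖u - v‖) (x p : E) :
    f p ≤ f x + ⟪gf x, p - x⟫_ℝ + L / 2 * ‖p - x‖ ^ 2 := by
  set v := p - x with hv
  have hgfc : Continuous gf := by
    refine (LipschitzWith.of_dist_le_mul (K := L.toNNReal) fun a b => ?_).continuous
    rw [dist_eq_norm, dist_eq_norm]
    exact (hLip a b).trans (by
      gcongr
      exact Real.le_coe_toNNReal L)
  have hcont : Continuous fun s : ℝ => ⟪gf (x + s • v), v⟫_ℝ := by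
    exact (hgfc.comp (by continuity)).inner continuous_const
  have hFTC : f (x + (1:ℝ) • v) - f (x + (0:ℝ) • v)
      = ∫ s in (0:ℝ)..1, ⟪gf (x + s • v), v⟫_ℝ := by
    refine (integral_eq_sub_of_hasDerivAt (fun s _ => line_hasDerivAt f gf hgf x v s) ?_).symm
    exact hcont.intervalIntegrable 0 1
  have hmono : (∫ s in (0:ℝ)..1, ⟪gf (x + s • v), v⟫_ℝ)
      ≤ ∫ s in (0:ℝ)..1, (⟪gf x, v⟫_ℝ + L * s * ‖v‖ ^ 2) := by
    refine integral_mono_on (by norm_num) (hcont.intervalIntegrable 0 1)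
      ((by continuity : Continuous fun s : ℝ => ⟪gf x, v⟫_ℝ + L * s * ‖v‖ ^ 2).intervalIntegrable 0 1)
      fun s hs => ?_
    have h1 : ⟪gf (x + s • v), v⟫_ℝ - ⟪gf x, v⟫_ℝ = ⟪gf (x + s • v) - gf x, v⟫_ℝ := by
      rw [inner_sub_left]
    have h2 : ⟪gf (x + s • v) - gf x, v⟫_ℝ ≤ ‖gf (x + s • v) - gf x‖ * ‖v‖ :=
      real_inner_le_norm _ _
    have h3 : ‖gf (x + s • v) - gf x‖ ≤ L * ‖s • v‖ := by
      simpa using hLip (x + s • v) x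
    have h4 : ‖s • v‖ = s * ‖v‖ := by
      rw [norm_smul, Real.norm_eq_abs, abs_of_nonneg hs.1]
    rw [h4] at h3
    nlinarith [mul_le_mul_of_nonneg_right h3 (norm_nonneg v)]
  have hval : (∫ s in (0:ℝ)..1, (⟪gf x, v⟫_ℝ + L * s * ‖v‖ ^ 2))
      = ⟪gf x, v⟫_ℝ + L / 2 * ‖v‖ ^ 2 := by
    rw [integral_add (intervalIntegrable_const)
      ((by fun_prop : Continuous fun s : ℝ => L * s * ‖v‖ ^ 2).intervalIntegrable 0 1)]
    simp only [integral_const]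
    have : (∫ s in (0:ℝ)..1, L * s * ‖v‖ ^ 2) = L / 2 * ‖v‖ ^ 2 := by
      have : (fun s : ℝ => L * s * ‖v‖ ^ 2) = fun s : ℝ => (L * ‖v‖ ^ 2) * s := by
        funext s; ring
      rw [this, integral_const_mul, integral_id]
      ring
    rw [this]; simp
  have h01 : x + (1:ℝ) • v = p := by simp [hv]
  have h00 : x + (0:ℝ) • v = x := by simp
  rw [h01, h00] at hFTC
  linarith [hFTC, hmono.trans_eq hval]

/-- Gradient inequality for convex functions. -/
lemma grad_lower (f : E → ℝ) (hfcv : ConvexOn ℝ Set.univ f)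
    (gf : E → E) (hgf : ∀ w, HasGradientAt f (gf w) w) (x p : E) :
    f x + ⟪gf x, p - x⟫_ℝ ≤ f p := by
  set v := p - x with hv
  have hder : HasDerivAt (fun r : ℝ => f (x + r • v)) ⟪gf x, v⟫_ℝ 0 := by
    have := line_hasDerivAt f gf hgf x v 0
    simpa using this
  have hslope : Filter.Tendsto (slope (fun r : ℝ => f (x + r • v)) 0) (nhdsWithin 0 (Set.Ioi 0))
      (nhds ⟪gf x, v⟫_ℝ) := by
    have := hasDerivAt_iff_tendsto_slope.mp hder
    exact this.mono_left (nhdsWithin_mono 0 fun s hs => ne_of_gt hs)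
  have hbound : ∀ᶠ s in nhdsWithin 0 (Set.Ioi 0),
      slope (fun r : ℝ => f (x + r • v)) 0 s ≤ f p - f x := by
    filter_upwards [Ioo_mem_nhdsGT_of_mem (Set.left_mem_Ico.mpr one_pos)] with s hs
    have hs0 : 0 < s := hs.1
    have hs1 : s < 1 := hs.2
    have hcomb : f (x + s • v) ≤ (1 - s) * f x + s * f p := by
      have hx : x + s • v = (1 - s) • x + s • p := by
        rw [hv]; module
      rw [hx]
      exact hfcv.2 (Set.mem_univ x) (Set.mem_univ p) (by linarith) hs0.le (by ring)
    rw [slope_def_field]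
    simp only [div_eq_iff, sub_zero, smul_zero, add_zero]
    rw [div_le_iff₀ hs0]
    calc f (x + s • v) - f (x + (0:ℝ) • v) = f (x + s • v) - f x := by simp
      _ ≤ (1 - s) * f x + s * f p - f x := by linarith
      _ = (f p - f x) * s := by ring
  have := le_of_tendsto hslope hbound
  linarith [this]

/-- Variational characterization of the projection. -/
lemma proj_char (Y : Set E) (hYcv : Convex ℝ Y)
    (proj : E → E) (hproj : ∀ u, proj u ∈ Y ∧ ∀ w ∈ Y, dist u (proj u) ≤ dist u w)
    (q : E) : ∀ w ∈ Y, ⟪q - proj q, w - proj q⟫_ℝ ≤ 0 := by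
  have hmem := (hproj q).1
  have hinf : ‖q - proj q‖ = ⨅ w : Y, ‖q - w‖ := by
    haveI : Nonempty Y := ⟨⟨proj q, hmem⟩⟩
    apply le_antisymm
    · exact le_ciInf fun w => by
        simpa [dist_eq_norm] using (hproj q).2 w w.2
    · exact ciInf_le ⟨0, fun _ ⟨w, hw⟩ => hw ▸ norm_nonneg _⟩ (⟨proj q, hmem⟩ : Y)
  exact (norm_eq_iInf_iff_real_inner_le_zero hYcv hmem).mp hinf

variable {E : Type*} [NormedAddCommGroup E] [InnerProductSpace ℝ E] [CompleteSpace E]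

lemma key_step (f : E → ℝ) (hfcv : ConvexOn ℝ Set.univ f)
    (gf : E → E) (hgf : ∀ w, HasGradientAt f (gf w) w)
    (L : ℝ) (hL : 0 < L) (hLip : ∀ u v, ‖gf u - gf v‖ ≤ L * ‖u - v‖)
    (Y : Set E) (hYcv : Convex ℝ Y)
    (proj : E → E) (hproj : ∀ u, proj u ∈ Y ∧ ∀ w ∈ Y, dist u (proj u) ≤ dist u w)
    (u x : E) (hx : x ∈ Y) :
    L * (‖proj (u - (1 / L) • gf u) - x‖ ^ 2 - ‖u - x‖ ^ 2)
      ≤ 2 * (f x - f (proj (u - (1 / L) • gf u))) := by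
  set g := gf u with hg
  set p := proj (u - (1 / L) • g) with hp
  -- descent lemma
  have ha : f p ≤ f u + ⟪g, p - u⟫_ℝ + L / 2 * ‖p - u‖ ^ 2 :=
    descent_lemma f gf hgf L hL.le hLip u p
  -- convexity lower bound
  have hb : f u + ⟪g, x - u⟫_ℝ ≤ f x := grad_lower f hfcv gf hgf u x
  -- projection variational inequality
  have hc : ⟪(u - (1 / L) • g) - p, x - p⟫_ℝ ≤ 0 :=
    proj_char Y hYcv proj hproj (u - (1 / L) • g) x hx
  have hc' : ⟪u - p, x - p⟫_ℝ - (1 / L) * ⟪g, x - p⟫_ℝ ≤ 0 := by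
    have : (u - (1 / L) • g) - p = (u - p) - (1 / L) • g := by abel
    rw [this, inner_sub_left, real_inner_smul_left] at hc
    linarith
  have hc'' : L * ⟪u - p, x - p⟫_ℝ ≤ ⟪g, x - p⟫_ℝ := by
    have := mul_le_mul_of_nonneg_left hc' hL.le
    field_simp at this
    linarith
  have hsplit : ⟪g, x - p⟫_ℝ = ⟪g, x - u⟫_ℝ - ⟪g, p - u⟫_ℝ := by
    rw [← inner_sub_right]
    congr 1
    abel
  have hid : ⟪u - p, x - p⟫_ℝ - ‖p - u‖ ^ 2 / 2 = (‖p - x‖ ^ 2 - ‖u - x‖ ^ 2) / 2 := by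
    simp only [norm_sub_sq_real, inner_sub_left, inner_sub_right, real_inner_self_eq_norm_sq]
    rw [real_inner_comm p u, real_inner_comm x u, real_inner_comm x p]
    ring
  nlinarith [hid, hc'', ha, hb, hsplit, hL]
/-- FISTA / Nesterov accelerated projected gradient with step `1/L`, started
at `y_0 = u_0 = z ∈ Y`, satisfies `f(y_K) − min_Y f ≤ 2L·dist(z,S)²/(K+1)²` (for `K ≥ 1`),
where `S` is the (nonempty) set of minimizers of `f` over `Y`. -/
theorem fista_rate {d : ℕ}
    (Y : Set (EuclideanSpace ℝ (Fin d))) (hYne : Y.Nonempty) (hYcl : IsClosed Y)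
    (hYcv : Convex ℝ Y)
    (f : EuclideanSpace ℝ (Fin d) → ℝ)
    (hfcv : ConvexOn ℝ Set.univ f)
    (gf : EuclideanSpace ℝ (Fin d) → EuclideanSpace ℝ (Fin d))
    (hgf : ∀ w, HasGradientAt f (gf w) w)
    (L : ℝ) (hL : 0 < L)
    (hLip : ∀ u v, ‖gf u - gf v‖ ≤ L * ‖u - v‖)
    (proj : EuclideanSpace ℝ (Fin d) → EuclideanSpace ℝ (Fin d))
    (hproj : ∀ u, proj u ∈ Y ∧ ∀ w ∈ Y, dist u (proj u) ≤ dist u w)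
    (S : Set (EuclideanSpace ℝ (Fin d)))
    (hS : S = {w ∈ Y | ∀ v ∈ Y, f w ≤ f v}) (hSne : S.Nonempty)
    (z : EuclideanSpace ℝ (Fin d)) (hz : z ∈ Y)
    (t : ℕ → ℝ) (ht0 : t 0 = 1)
    (htrec : ∀ k, t (k + 1) = (1 + Real.sqrt (1 + 4 * t k ^ 2)) / 2)
    (y u : ℕ → EuclideanSpace ℝ (Fin d)) (hy0 : y 0 = z) (hu0 : u 0 = z)
    (hyrec : ∀ k, y (k + 1) = proj (u k - (1 / L) • gf (u k)))
    (hurec : ∀ k, u (k + 1) = y (k + 1) + ((t k - 1) / t (k + 1)) • (y (k + 1) - y k)) :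
    ∀ K : ℕ, 1 ≤ K → ∀ ystar ∈ S,
      f (y K) - f ystar ≤ 2 * L * Metric.infDist z S ^ 2 / ((K : ℝ) + 1) ^ 2 := by
  intro K hK ystar hystar
  have hystar' : ystar ∈ Y ∧ ∀ v ∈ Y, f ystar ≤ f v := by rw [hS] at hystar; exact hystar
  -- iterates stay in Y
  have hyY : ∀ k, y k ∈ Y := by
    intro k
    cases k with
    | zero => rw [hy0]; exact hz
    | succ n => rw [hyrec n]; exact (hproj _).1
  -- lower bound on t
  have htlb : ∀ k : ℕ, ((k : ℝ) + 2) / 2 ≤ t k := by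
    intro k
    induction k with
    | zero => norm_num [ht0]
    | succ n ih =>
      have htn : 0 ≤ t n := le_trans (by positivity) ih
      have hsq : 2 * t n ≤ Real.sqrt (1 + 4 * t n ^ 2) :=
        (Real.le_sqrt (by positivity) (by positivity)).mpr (by nlinarith)
      rw [htrec n]
      push_cast
      linarith
  have ht1 : ∀ k, 1 ≤ t k := by
    intro k
    have h := htlb k
    have : (0:ℝ) ≤ (k : ℝ) := Nat.cast_nonneg k
    linarith
  have htpos : ∀ k, 0 < t k := fun k => lt_of_lt_of_le one_pos (ht1 k)
  have htsq : ∀ k, t (k + 1) ^ 2 = t (k + 1) + t k ^ 2 := by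
    intro k
    have h1 : (0:ℝ) ≤ 1 + 4 * t k ^ 2 := by positivity
    have h2 := Real.sq_sqrt h1
    rw [htrec k]
    linear_combination h2 / 4
  -- one-step inequality
  have hstep : ∀ k, ∀ x ∈ Y, L * (‖y (k + 1) - x‖ ^ 2 - ‖u k - x‖ ^ 2)
      ≤ 2 * (f x - f (y (k + 1))) := by
    intro k x hx
    rw [hyrec k]
    exact key_step f hfcv gf hgf L hL hLip Y hYcv proj hproj (u k) x hx
  -- main telescoping estimate
  have main : ∀ w ∈ S, ∀ n : ℕ,
      2 * t n ^ 2 * (f (y (n + 1)) - f w)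
          + L * ‖t n • y (n + 1) - (t n - 1) • y n - w‖ ^ 2
        ≤ L * ‖z - w‖ ^ 2 := by
    intro w hw
    have hw' : w ∈ Y ∧ ∀ v ∈ Y, f w ≤ f v := by rw [hS] at hw; exact hw
    intro n
    induction n with
    | zero =>
      have h0 := hstep 0 w hw'.1
      rw [hu0] at h0
      have hs0 : t 0 • y 1 - (t 0 - 1) • y 0 - w = y 1 - w := by
        rw [ht0]; simp
      rw [hs0, ht0]
      nlinarith [h0]
    | succ n ih =>
      have hA := hstep (n + 1) (y (n + 1)) (hyY (n + 1))
      have hB := hstep (n + 1) w hw'.1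
      have ha1 : y (n + 1 + 1) - y (n + 1)
          = (y (n + 1 + 1) - u (n + 1)) + (u (n + 1) - y (n + 1)) := by abel
      have ha2 : y (n + 1 + 1) - w
          = (y (n + 1 + 1) - u (n + 1)) + (u (n + 1) - w) := by abel
      have hA' : ‖y (n + 1 + 1) - y (n + 1)‖ ^ 2 - ‖u (n + 1) - y (n + 1)‖ ^ 2
          = ‖y (n + 1 + 1) - u (n + 1)‖ ^ 2
            + 2 * ⟪y (n + 1 + 1) - u (n + 1), u (n + 1) - y (n + 1)⟫_ℝ := by
        rw [ha1, norm_add_sq_real]; ring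
      have hB' : ‖y (n + 1 + 1) - w‖ ^ 2 - ‖u (n + 1) - w‖ ^ 2
          = ‖y (n + 1 + 1) - u (n + 1)‖ ^ 2
            + 2 * ⟪y (n + 1 + 1) - u (n + 1), u (n + 1) - w⟫_ℝ := by
        rw [ha2, norm_add_sq_real]; ring
      rw [hA'] at hA
      rw [hB'] at hB
      have hip : ⟪y (n + 1 + 1) - u (n + 1),
            t (n + 1) • u (n + 1) - (t (n + 1) - 1) • y (n + 1) - w⟫_ℝ
          = (t (n + 1) - 1) * ⟪y (n + 1 + 1) - u (n + 1), u (n + 1) - y (n + 1)⟫_ℝ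
            + ⟪y (n + 1 + 1) - u (n + 1), u (n + 1) - w⟫_ℝ := by
        have h : t (n + 1) • u (n + 1) - (t (n + 1) - 1) • y (n + 1) - w
            = (t (n + 1) - 1) • (u (n + 1) - y (n + 1)) + (u (n + 1) - w) := by module
        rw [h, inner_add_right, real_inner_smul_right]
      have hBs : t (n + 1) • u (n + 1) - (t (n + 1) - 1) • y (n + 1) - w
          = t n • y (n + 1) - (t n - 1) • y n - w := by
        have hc : t (n + 1) * ((t n - 1) / t (n + 1)) = t n - 1 :=
          mul_div_cancel₀ _ (ne_of_gt (htpos (n + 1)))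
        rw [hurec n, smul_add, smul_smul, hc]
        module
      have hs1 : t (n + 1) • (y (n + 1 + 1) - u (n + 1))
            + (t (n + 1) • u (n + 1) - (t (n + 1) - 1) • y (n + 1) - w)
          = t (n + 1) • y (n + 1 + 1) - (t (n + 1) - 1) • y (n + 1) - w := by
        module
      have hnorm : ‖t (n + 1) • y (n + 1 + 1) - (t (n + 1) - 1) • y (n + 1) - w‖ ^ 2
          = t (n + 1) ^ 2 * ‖y (n + 1 + 1) - u (n + 1)‖ ^ 2
            + 2 * t (n + 1) * ⟪y (n + 1 + 1) - u (n + 1),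
                t (n + 1) • u (n + 1) - (t (n + 1) - 1) • y (n + 1) - w⟫_ℝ
            + ‖t (n + 1) • u (n + 1) - (t (n + 1) - 1) • y (n + 1) - w‖ ^ 2 := by
        rw [← hs1, norm_add_sq_real, real_inner_smul_left, norm_smul, Real.norm_eq_abs,
          mul_pow, sq_abs]
        ring
      have hτσ : t (n + 1) ^ 2 = t (n + 1) + t n ^ 2 := htsq n
      have hτ1 : 1 ≤ t (n + 1) := ht1 (n + 1)
      have h1 := mul_le_mul_of_nonneg_left hA
        (mul_nonneg (htpos (n + 1)).le (by linarith : (0:ℝ) ≤ t (n + 1) - 1))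
      have h2 := mul_le_mul_of_nonneg_left hB (htpos (n + 1)).le
      have heq : 2 * t (n + 1) ^ 2 * (f (y (n + 1)) - f w)
          = 2 * t (n + 1) * (f (y (n + 1)) - f w) + 2 * t n ^ 2 * (f (y (n + 1)) - f w) := by
        linear_combination (2 * (f (y (n + 1)) - f w)) * hτσ
      rw [hnorm, hip, hBs]
      linarith [h1, h2, ih, heq]
  -- conclusion
  obtain ⟨n, rfl⟩ : ∃ n, K = n + 1 := ⟨K - 1, (Nat.succ_pred_eq_of_pos hK).symm⟩
  have hfge : 0 ≤ f (y (n + 1)) - f ystar :=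
    sub_nonneg.mpr (hystar'.2 _ (hyY (n + 1)))
  have hbound : ∀ w ∈ S, (f (y (n + 1)) - f ystar) * ((n : ℝ) + 2) ^ 2
      ≤ 2 * L * dist z w ^ 2 := by
    intro w hw
    have hm := main w hw n
    have hw' : w ∈ Y ∧ ∀ v ∈ Y, f w ≤ f v := by rw [hS] at hw; exact hw
    have hfw : f w = f ystar :=
      le_antisymm (hw'.2 ystar hystar'.1) (hystar'.2 w hw'.1)
    rw [hfw] at hm
    have hnn : (0:ℝ) ≤ L * ‖t n • y (n + 1) - (t n - 1) • y n - w‖ ^ 2 := by positivity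
    have h1 : 2 * t n ^ 2 * (f (y (n + 1)) - f ystar) ≤ L * ‖z - w‖ ^ 2 := by linarith
    have htn : ((n : ℝ) + 2) / 2 ≤ t n := htlb n
    have hsq : ((n : ℝ) + 2) ^ 2 / 4 ≤ t n ^ 2 := by
      have h := pow_le_pow_left₀ (by positivity : (0:ℝ) ≤ ((n : ℝ) + 2) / 2) htn 2
      calc ((n : ℝ) + 2) ^ 2 / 4 = (((n : ℝ) + 2) / 2) ^ 2 := by ring
        _ ≤ t n ^ 2 := h
    have h2 := mul_le_mul_of_nonneg_right hsq hfge
    rw [dist_eq_norm]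
    nlinarith [h1, h2]
  set c := (f (y (n + 1)) - f ystar) * ((n : ℝ) + 2) ^ 2 / (2 * L) with hc
  have hc0 : 0 ≤ c :=
    div_nonneg (mul_nonneg hfge (by positivity)) (by positivity)
  have hcle : ∀ w : S, Real.sqrt c ≤ dist z (w : EuclideanSpace ℝ (Fin d)) := by
    intro w
    have hb := hbound w w.2
    have hcd : c ≤ dist z (w : EuclideanSpace ℝ (Fin d)) ^ 2 := by
      rw [hc, div_le_iff₀ (by positivity)]
      linarith
    calc Real.sqrt c ≤ Real.sqrt (dist z (w : EuclideanSpace ℝ (Fin d)) ^ 2) :=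
          Real.sqrt_le_sqrt hcd
      _ = dist z (w : EuclideanSpace ℝ (Fin d)) := Real.sqrt_sq dist_nonneg
  have hinf : Real.sqrt c ≤ Metric.infDist z S := by
    rw [Metric.infDist_eq_iInf]
    haveI : Nonempty S := hSne.to_subtype
    exact le_ciInf hcle
  have hfin : c ≤ Metric.infDist z S ^ 2 := by
    have h := pow_le_pow_left₀ (Real.sqrt_nonneg c) hinf 2
    rwa [Real.sq_sqrt hc0] at h
  have hkey : (f (y (n + 1)) - f ystar) * ((n : ℝ) + 2) ^ 2
      ≤ 2 * L * Metric.infDist z S ^ 2 := by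
    rw [hc, div_le_iff₀ (by positivity)] at hfin
    linarith
  rw [le_div_iff₀ (by positivity)]
  push_cast
  nlinarith [hkey]
end

section
/- Let X ⊆ R^n, Y ⊆ R^m be compact, f : X × R^m → R continuous, f(x, ·) convex for each x, with minimizer set S(x) ⊆ Y nonempty. Suppose the approximation maps y_K(x, z) ∈ Y satisfy the uniform objective-gap condition: for every ε > 0 there exists K(ε) with sup_{(x,z) ∈ X×Y} (f(x, y_K(x,z)) − f*(x)) ≤ ε for all K > K(ε), where f*(x) = min_{y ∈ Y} f(x, y). If x_j → x̄ and y_j := y_{K_j}(x_j, z_j) → ȳ as K_j → ∞, then ȳ ∈ S(x̄). -/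
open Filter Topology

/-- Under the uniform objective-gap condition
`sup_{(x,z) ∈ X×Y} (f(x, y_K(x,z)) − f*(x)) ≤ ε` for large `K`, any limit `ȳ` of
`y_{K_j}(x_j, z_j)` with `x_j → x̄` belongs to the lower-level solution set `S(x̄)`. -/
theorem limit_is_minimizer_of_uniform_gap {n m : ℕ}
    (X : Set (EuclideanSpace ℝ (Fin n))) (Y : Set (EuclideanSpace ℝ (Fin m)))
    (hX : IsCompact X) (hY : IsCompact Y) (hYne : Y.Nonempty)
    (f : EuclideanSpace ℝ (Fin n) × EuclideanSpace ℝ (Fin m) → ℝ)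
    (hf : Continuous f)
    (hfcv : ∀ x, ConvexOn ℝ Set.univ fun w => f (x, w))
    (hSne : ∀ x ∈ X, ∃ w ∈ Y, ∀ v ∈ Y, f (x, w) ≤ f (x, v))
    (yK : ℕ → EuclideanSpace ℝ (Fin n) → EuclideanSpace ℝ (Fin m) →
      EuclideanSpace ℝ (Fin m))
    (hyY : ∀ K, ∀ x ∈ X, ∀ z ∈ Y, yK K x z ∈ Y)
    (hgap : ∀ ε > (0:ℝ), ∃ N, ∀ K > N, ∀ x ∈ X, ∀ z ∈ Y,
      f (x, yK K x z) - sInf ((fun w => f (x, w)) '' Y) ≤ ε)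
    (Kj : ℕ → ℕ) (hKj : Tendsto Kj atTop atTop)
    (xs : ℕ → EuclideanSpace ℝ (Fin n)) (zs : ℕ → EuclideanSpace ℝ (Fin m))
    (hxs : ∀ j, xs j ∈ X) (hzs : ∀ j, zs j ∈ Y)
    (xbar : EuclideanSpace ℝ (Fin n)) (ybar : EuclideanSpace ℝ (Fin m))
    (hxconv : Tendsto xs atTop (𝓝 xbar))
    (hyconv : Tendsto (fun j => yK (Kj j) (xs j) (zs j)) atTop (𝓝 ybar)) :
    ybar ∈ Y ∧ ∀ v ∈ Y, f (xbar, ybar) ≤ f (xbar, v) := by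
  set ys : ℕ → EuclideanSpace ℝ (Fin m) := fun j => yK (Kj j) (xs j) (zs j) with hys
  have hysY : ∀ j, ys j ∈ Y := fun j => hyY _ _ (hxs j) _ (hzs j)
  have hybarY : ybar ∈ Y := hY.isClosed.mem_of_tendsto hyconv (Eventually.of_forall hysY)
  refine ⟨hybarY, fun v hv => ?_⟩
  -- limit of f (xs j, ys j) is f (xbar, ybar)
  have hlim1 : Tendsto (fun j => f (xs j, ys j)) atTop (𝓝 (f (xbar, ybar))) :=
    (hf.tendsto _).comp (hxconv.prodMk_nhds hyconv)
  have hlim2 : Tendsto (fun j => f (xs j, v)) atTop (𝓝 (f (xbar, v))) :=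
    (hf.tendsto _).comp (hxconv.prodMk_nhds tendsto_const_nhds)
  have key : ∀ ε > (0:ℝ), f (xbar, ybar) ≤ f (xbar, v) + ε := by
    intro ε hε
    obtain ⟨N, hN⟩ := hgap ε hε
    have hev : ∀ᶠ j in atTop, f (xs j, ys j) ≤ f (xs j, v) + ε := by
      filter_upwards [hKj.eventually_gt_atTop N] with j hj
      have hbdd : BddBelow ((fun w => f (xs j, w)) '' Y) :=
        ((hY.image (hf.comp (Continuous.prodMk_right (xs j)))).bddBelow)
      have hinf : sInf ((fun w => f (xs j, w)) '' Y) ≤ f (xs j, v) :=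
        csInf_le hbdd ⟨v, hv, rfl⟩
      have := hN _ hj _ (hxs j) _ (hzs j)
      linarith
    have : Tendsto (fun j => f (xs j, v) + ε) atTop (𝓝 (f (xbar, v) + ε)) :=
      hlim2.add tendsto_const_nhds
    exact le_of_tendsto_of_tendsto hlim1 this hev
  linarith [le_of_forall_pos_le_add key]
end
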